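/- Let L ≥ 1, h, a ∈ ℂ^L with a ≠ 0, and P ≥ 0 real. Then ‖a‖² − P|⟨h,a⟩|²/(1 + P‖h‖²) ≥ ‖a‖²/(1 + P‖h‖²) > 0, where ⟨h,a⟩ = Σ_l conj(h_l) a_l. Consequently the computation rate expression log⁺((‖a‖² − P|⟨h,a⟩|²/(1 + P‖h‖²))^{−1}) is at most log⁺((1 + P‖h‖²)/‖a‖²); in particular it is strictly positive only if ‖a‖² < 1 + P‖h‖². -/

import Mathlib

/-- log⁺(x) = max(log₂ x, 0). -/
noncomputable def logPlus (x : ℝ) : ℝ := max (Real.logb 2 x) 0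

/-! Cauchy–Schwarz gives `|⟨h,a⟩|² ≤ ‖h‖²‖a‖²`, so the subtracted term is at most
`P‖h‖²‖a‖²/(1 + P‖h‖²)` and what remains of `‖a‖²` is at least `‖a‖²/(1 + P‖h‖²) > 0`.
Inverting this lower bound and using that `log⁺` is monotone on positive reals bounds the rate. -/

theorem norm_sum_conj_mul_sq_le {𝕜 ι : Type*} [RCLike 𝕜] [Fintype ι] (h a : ι → 𝕜) :
    ‖∑ l, (starRingEnd 𝕜) (h l) * a l‖ ^ 2 ≤ (∑ l, ‖h l‖ ^ 2) * ∑ l, ‖a l‖ ^ 2 := by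
  have hinner : inner 𝕜 (WithLp.toLp 2 h) (WithLp.toLp 2 a) = ∑ l, (starRingEnd 𝕜) (h l) * a l := by
    simp [PiLp.inner_apply, mul_comm]
  calc ‖∑ l, (starRingEnd 𝕜) (h l) * a l‖ ^ 2
      ≤ (‖WithLp.toLp 2 h‖ * ‖WithLp.toLp 2 a‖) ^ 2 := by
        rw [← hinner]
        exact pow_le_pow_left₀ (norm_nonneg _) (norm_inner_le_norm _ _) 2
    _ = (∑ l, ‖h l‖ ^ 2) * ∑ l, ‖a l‖ ^ 2 := by
        rw [mul_pow, EuclideanSpace.norm_sq_eq, EuclideanSpace.norm_sq_eq]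

theorem sum_norm_sq_pos {E ι : Type*} [NormedAddCommGroup E] [Fintype ι] {a : ι → E}
    (ha : a ≠ 0) : 0 < ∑ l, ‖a l‖ ^ 2 := by
  obtain ⟨l, hl⟩ := Function.ne_iff.mp ha
  exact Finset.sum_pos' (fun i _ => by positivity) ⟨l, Finset.mem_univ l, by positivity⟩

theorem div_one_add_mul_le_sub_div {A H S P : ℝ} (hP : 0 ≤ P) (hH : 0 ≤ H) (hS : S ≤ H * A) :
    A / (1 + P * H) ≤ A - P * S / (1 + P * H) := by
  have hD : 0 < 1 + P * H := by positivity
  rw [le_sub_iff_add_le, ← add_div, div_le_iff₀ hD]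
  nlinarith [mul_le_mul_of_nonneg_left hS hP]

theorem logPlus_le_logPlus {x y : ℝ} (hx : 0 < x) (hxy : x ≤ y) : logPlus x ≤ logPlus y :=
  max_le_max (Real.logb_le_logb_of_le one_lt_two hx hxy) le_rfl

theorem one_lt_of_logPlus_pos {x : ℝ} (hx : 0 < x) (hpos : 0 < logPlus x) : 1 < x := by
  rcases lt_max_iff.mp hpos with hlog | hzero
  · exact (Real.logb_pos_iff one_lt_two hx).mp hlog
  · exact absurd hzero (lt_irrefl 0)

theorem stmt_19_general (L : ℕ) (h a : Fin L → ℂ) (ha : a ≠ 0)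
    (P : ℝ) (hP : 0 ≤ P) :
    (∑ l, ‖a l‖ ^ 2) / (1 + P * ∑ l, ‖h l‖ ^ 2) ≤
      (∑ l, ‖a l‖ ^ 2) -
        P * ‖∑ l, (starRingEnd ℂ) (h l) * a l‖ ^ 2 /
          (1 + P * ∑ l, ‖h l‖ ^ 2) ∧
    0 < (∑ l, ‖a l‖ ^ 2) / (1 + P * ∑ l, ‖h l‖ ^ 2) ∧
    logPlus (((∑ l, ‖a l‖ ^ 2) -
        P * ‖∑ l, (starRingEnd ℂ) (h l) * a l‖ ^ 2 /
          (1 + P * ∑ l, ‖h l‖ ^ 2))⁻¹) ≤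
      logPlus ((1 + P * ∑ l, ‖h l‖ ^ 2) / ∑ l, ‖a l‖ ^ 2) ∧
    (0 < logPlus (((∑ l, ‖a l‖ ^ 2) -
        P * ‖∑ l, (starRingEnd ℂ) (h l) * a l‖ ^ 2 /
          (1 + P * ∑ l, ‖h l‖ ^ 2))⁻¹) →
      (∑ l, ‖a l‖ ^ 2) < 1 + P * ∑ l, ‖h l‖ ^ 2) := by
  set A := ∑ l, ‖a l‖ ^ 2
  set H := ∑ l, ‖h l‖ ^ 2
  have hA : 0 < A := sum_norm_sq_pos ha
  have hD : 0 < 1 + P * H := by positivity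
  have hlower := div_one_add_mul_le_sub_div hP (by positivity) (norm_sum_conj_mul_sq_le h a)
  have hlower_pos : 0 < A / (1 + P * H) := by positivity
  have hrate := logPlus_le_logPlus (inv_pos.mpr (hlower_pos.trans_le hlower))
    ((inv_anti₀ hlower_pos hlower).trans_eq (inv_div A (1 + P * H)))
  refine ⟨hlower, hlower_pos, hrate, fun hpos => ?_⟩
  exact (one_lt_div hA).mp (one_lt_of_logPlus_pos (by positivity) (hpos.trans_le hrate))

/-- For a ≠ 0 and P ≥ 0: ‖a‖² − P|⟨h,a⟩|²/(1+P‖h‖²) ≥ ‖a‖²/(1+P‖h‖²) > 0;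
consequently log⁺((‖a‖² − P|⟨h,a⟩|²/(1+P‖h‖²))⁻¹) ≤ log⁺((1+P‖h‖²)/‖a‖²), and
the computation rate is strictly positive only if ‖a‖² < 1 + P‖h‖². -/
theorem stmt_19 (L : ℕ) (hL : 1 ≤ L) (h a : Fin L → ℂ) (ha : a ≠ 0)
    (P : ℝ) (hP : 0 ≤ P) :
    (∑ l, ‖a l‖ ^ 2) / (1 + P * ∑ l, ‖h l‖ ^ 2) ≤
      (∑ l, ‖a l‖ ^ 2) -
        P * ‖∑ l, (starRingEnd ℂ) (h l) * a l‖ ^ 2 /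
          (1 + P * ∑ l, ‖h l‖ ^ 2) ∧
    0 < (∑ l, ‖a l‖ ^ 2) / (1 + P * ∑ l, ‖h l‖ ^ 2) ∧
    logPlus (((∑ l, ‖a l‖ ^ 2) -
        P * ‖∑ l, (starRingEnd ℂ) (h l) * a l‖ ^ 2 /
          (1 + P * ∑ l, ‖h l‖ ^ 2))⁻¹) ≤
      logPlus ((1 + P * ∑ l, ‖h l‖ ^ 2) / ∑ l, ‖a l‖ ^ 2) ∧
    (0 < logPlus (((∑ l, ‖a l‖ ^ 2) -
        P * ‖∑ l, (starRingEnd ℂ) (h l) * a l‖ ^ 2 /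
          (1 + P * ∑ l, ‖h l‖ ^ 2))⁻¹) →
      (∑ l, ‖a l‖ ^ 2) < 1 + P * ∑ l, ‖h l‖ ^ 2) :=
  stmt_19_general L h a ha P hP
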